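/- arXiv:1609.00861 — 7 statements merged into one kernel-verified Lean document; each statement's English description precedes it below -/
import Mathlib

section
/- For all real x ≥ 2, the function q defined by q(x) = (x - 2 + e^{-x}(x+2)) / (x(1 - e^{-x}(x+1))) satisfies q(x) ≤ 1 - 1/x. -/
/-- The function `q` from the paper. -/
noncomputable def q (x : ℝ) : ℝ :=
  if x = 0 then 1/3
  else (x - 2 + Real.exp (-x) * (x + 2)) / (x * (1 - Real.exp (-x) * (x + 1)))

theorem q_le (x : ℝ) (hx : 2 ≤ x) : q x ≤ 1 - 1 / x := by
  have hx0 : (0:ℝ) < x := by linarith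
  have hxne : x ≠ 0 := ne_of_gt hx0
  rw [q, if_neg hxne]
  have hE : Real.exp (-x) * Real.exp x = 1 := by
    rw [← Real.exp_add]; simp
  have hEpos : 0 < Real.exp (-x) := Real.exp_pos _
  have hkey : x ^ 2 + x + 1 ≤ Real.exp x := by
    have h := Real.sum_le_exp_of_nonneg (by linarith : (0:ℝ) ≤ x) 5
    have hs : ∑ i ∈ Finset.range 5, x ^ i / (Nat.factorial i) =
        1 + x + x ^ 2 / 2 + x ^ 3 / 6 + x ^ 4 / 24 := by
      simp [Finset.sum_range_succ, Nat.factorial]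
    rw [hs] at h
    nlinarith [sq_nonneg x, sq_nonneg (x - 2)]
  have hlt : x + 1 < Real.exp x := by
    nlinarith [sq_nonneg x]
  have hden : 0 < 1 - Real.exp (-x) * (x + 1) := by
    have : Real.exp (-x) * (x + 1) < Real.exp (-x) * Real.exp x :=
      mul_lt_mul_of_pos_left hlt hEpos
    rw [hE] at this; linarith
  have hdenx : 0 < x * (1 - Real.exp (-x) * (x + 1)) := mul_pos hx0 hden
  rw [div_le_iff₀ hdenx]
  have hkey' : Real.exp (-x) * (x ^ 2 + x + 1) ≤ 1 := by
    calc Real.exp (-x) * (x ^ 2 + x + 1) ≤ Real.exp (-x) * Real.exp x :=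
          mul_le_mul_of_nonneg_left hkey (le_of_lt hEpos)
      _ = 1 := hE
  have h1x : 1 - 1 / x = (x - 1) / x := by field_simp
  rw [h1x, div_mul_eq_mul_div, le_div_iff₀ hx0]
  nlinarith [hkey']
end

section
/- For every real x, the function ρ(x) := (1 + q(x))/(1 - q(x)) satisfies ρ(x) ≤ max(3, 2x), where q is defined by q(x) = (x - 2 + e^{-x}(x+2)) / (x(1 - e^{-x}(x+1))) for x ≠ 0 and q(0) = 1/3. -/
/-- The function `ρ = (1 + q)/(1 - q)`. -/
noncomputable def rho (x : ℝ) : ℝ := (1 + q x) / (1 - q x)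

open Real

lemma Real.quartic_le_exp_of_nonneg {x : ℝ} (hx : 0 ≤ x) :
    1 + x + x ^ 2 / 2 + x ^ 3 / 6 + x ^ 4 / 24 ≤ exp x := by
  have h := sum_le_exp_of_nonneg hx 5
  norm_num [Finset.sum_range_succ, Nat.factorial] at h
  linarith

lemma Real.exp_mul_quartic_le_one_of_nonpos {x : ℝ} (hx : x ≤ 0) :
    exp x * (1 - x + x ^ 2 / 2 - x ^ 3 / 6 + x ^ 4 / 24) ≤ 1 := by
  have h := quartic_le_exp_of_nonneg (neg_nonneg.mpr hx)
  calc exp x * (1 - x + x ^ 2 / 2 - x ^ 3 / 6 + x ^ 4 / 24)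
      = exp x * (1 + -x + (-x) ^ 2 / 2 + (-x) ^ 3 / 6 + (-x) ^ 4 / 24) := by ring
    _ ≤ exp x * exp (-x) := by gcongr
    _ = 1 := by rw [← exp_add, add_neg_cancel, exp_zero]

lemma two_exp_sub_quadratic_pos {x : ℝ} (hx : 0 < x) :
    0 < 2 * exp x - (x ^ 2 + 2 * x + 2) := by
  nlinarith [quartic_le_exp_of_nonneg hx.le, pow_pos hx 3, pow_pos hx 4]

lemma two_exp_sub_quadratic_neg {x : ℝ} (hx : x < 0) :
    2 * exp x - (x ^ 2 + 2 * x + 2) < 0 := by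
  have hy : 0 < -x := neg_pos.mpr hx
  nlinarith [exp_mul_quartic_le_one_of_nonpos hx.le, exp_pos x, pow_pos hy 3, pow_pos hy 4]

lemma q_eq_of_ne_zero {x : ℝ} (hx : x ≠ 0) :
    q x = ((x - 2) * exp x + x + 2) / (x * (exp x - x - 1)) := by
  have he : exp x ≠ 0 := (exp_pos x).ne'
  rw [q, if_neg hx, exp_neg, ← mul_div_mul_right _ _ he]
  congr 1 <;> field_simp <;> ring

lemma rho_eq_of_ne_zero {x : ℝ} (hx : x ≠ 0) :
    rho x = (2 * (x - 1) * exp x + 2 - x ^ 2) / (2 * exp x - (x ^ 2 + 2 * x + 2)) := by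
  have hB : x * (exp x - x - 1) ≠ 0 := mul_ne_zero hx (by linarith [add_one_lt_exp hx])
  rw [rho, q_eq_of_ne_zero hx, one_add_div hB, one_sub_div hB, div_div_div_cancel_right₀ hB]
  congr 1 <;> ring

lemma rho_zero : rho 0 = 2 := by norm_num [rho, q]

lemma rho_le_three_of_neg {x : ℝ} (hx : x < 0) : rho x ≤ 3 := by
  have hy : 0 < -x := neg_pos.mpr hx
  rw [rho_eq_of_ne_zero hx.ne, div_le_iff_of_neg (two_exp_sub_quadratic_neg hx)]
  nlinarith [exp_mul_quartic_le_one_of_nonpos hx.le, exp_pos x, pow_pos hy 3, pow_pos hy 4]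

lemma rho_le_three_of_pos_of_le_two {x : ℝ} (hx : 0 < x) (hx2 : x ≤ 2) : rho x ≤ 3 := by
  rw [rho_eq_of_ne_zero hx.ne', div_le_iff₀ (two_exp_sub_quadratic_pos hx)]
  -- `(8 - 2x) T₄(x) - (2x² + 6x + 8) = x³(4 - x²)/12`
  have hpoly : 0 ≤ x ^ 3 * (4 - x ^ 2) := mul_nonneg (pow_nonneg hx.le 3) (by nlinarith)
  nlinarith [quartic_le_exp_of_nonneg hx.le]

lemma rho_le_three_of_le_two {x : ℝ} (hx : x ≤ 2) : rho x ≤ 3 := by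
  rcases lt_trichotomy x 0 with hneg | rfl | hpos
  · exact rho_le_three_of_neg hneg
  · norm_num [rho_zero]
  · exact rho_le_three_of_pos_of_le_two hpos hx

lemma rho_le_two_mul_of_three_halves_le {x : ℝ} (hx : 3 / 2 ≤ x) : rho x ≤ 2 * x := by
  have hpos : 0 < x := by linarith
  rw [rho_eq_of_ne_zero hpos.ne', div_le_iff₀ (two_exp_sub_quadratic_pos hpos)]
  -- `(2x + 2) T₄(x) - (2x³ + 3x² + 4x + 2) = x³(x² + 5x - 8)/12`
  have hpoly : 0 ≤ x ^ 3 * (x ^ 2 + 5 * x - 8) :=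
    mul_nonneg (pow_nonneg hpos.le 3) (by nlinarith)
  nlinarith [quartic_le_exp_of_nonneg hpos.le]

theorem rho_le (x : ℝ) : rho x ≤ max 3 (2 * x) := by
  rcases le_total x 2 with hx | hx
  · exact (rho_le_three_of_le_two hx).trans (le_max_left _ _)
  · exact (rho_le_two_mul_of_three_halves_le (by linarith)).trans (le_max_right _ _)
end

section
/- Let g : [a,b] → (-∞,∞] be convex with g(r) = 0 for some r ∈ [a,b), let β, c ∈ ℝ, and define G(x) = c + ∫_a^x e^{β} g(t) dt. Then for every x ∈ (r,b], (G(x) - G(r))/(x - r)² ≤ (G(b) - G(r))/(b - r)². -/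
/-!
Since `g r = 0`, convexity gives `g (r + λ (u - r)) ≤ λ g u` for `λ ∈ [0, 1]`. With
`λ = (x - r) / (b - r)` the substitution `t = r + λ (u - r)` maps `[r, b]` onto `[r, x]`, so
`∫ r..x g = λ ∫ r..b g (r + λ (u - r)) du ≤ λ² ∫ r..b g`, which is the claim once `exp β` and
`c` are cancelled.
-/

open MeasureTheory intervalIntegral Set

theorem ConvexOn.le_mul_of_apply_eq_zero {s : Set ℝ} {g : ℝ → ℝ} (hg : ConvexOn ℝ s g)
    {r u t : ℝ} (hr : r ∈ s) (hu : u ∈ s) (hgr : g r = 0) (ht₀ : 0 ≤ t) (ht₁ : t ≤ 1) :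
    g (t * u + (r - t * r)) ≤ t * g u := by
  have := hg.2 hr hu (sub_nonneg.2 ht₁) ht₀ (sub_add_cancel 1 t)
  simp only [smul_eq_mul, hgr, mul_zero, zero_add] at this
  rwa [show t * u + (r - t * r) = (1 - t) * r + t * u by ring]

theorem ConvexOn.intervalIntegral_le_sq_mul {g : ℝ → ℝ} {r x b : ℝ}
    (hg : ConvexOn ℝ (Icc r b) g) (hgr : g r = 0) (hgi : IntervalIntegrable g volume r b)
    (hrx : r < x) (hxb : x ≤ b) :
    ∫ t in r..x, g t ≤ ((x - r) / (b - r)) ^ 2 * ∫ t in r..b, g t := by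
  set k := (x - r) / (b - r)
  have hrb : r < b := hrx.trans_le hxb
  have hk₀ : 0 < k := div_pos (sub_pos.2 hrx) (sub_pos.2 hrb)
  have hk₁ : k ≤ 1 := (div_le_one (sub_pos.2 hrb)).2 (by linarith)
  have hr_img : k * r + (r - k * r) = r := by ring
  have hb_img : k * b + (r - k * r) = x := by
    linear_combination (div_mul_cancel₀ (x - r) (sub_pos.2 hrb).ne' : k * (b - r) = x - r)
  have hsubst : ∫ t in r..x, g t = k * ∫ u in r..b, g (k * u + (r - k * r)) := by
    rw [integral_comp_mul_add _ hk₀.ne', hr_img, hb_img, smul_eq_mul,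
      mul_inv_cancel_left₀ hk₀.ne']
  have hgx : IntervalIntegrable g volume r x :=
    hgi.mono_set (uIcc_subset_uIcc_left (mem_uIcc_of_le hrx.le hxb))
  have hcomp : IntervalIntegrable (fun u => g (k * u + (r - k * r))) volume r b := by
    convert (hgx.comp_add_right (r - k * r)).comp_mul_left (c := k) using 1
    · field_simp; ring
    · rw [eq_div_iff hk₀.ne']; linarith
  calc ∫ t in r..x, g t = k * ∫ u in r..b, g (k * u + (r - k * r)) := hsubst
    _ ≤ k * ∫ u in r..b, k * g u := by
      gcongr
      exact integral_mono_on hrb.le hcomp (hgi.const_mul k) fun u hu =>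
        hg.le_mul_of_apply_eq_zero (left_mem_Icc.2 hrb.le) hu hgr hk₀.le hk₁
    _ = k ^ 2 * ∫ t in r..b, g t := by rw [intervalIntegral.integral_const_mul]; ring

theorem ConvexOn.intervalIntegral_div_sq_le {g : ℝ → ℝ} {r x b : ℝ}
    (hg : ConvexOn ℝ (Icc r b) g) (hgr : g r = 0) (hgi : IntervalIntegrable g volume r b)
    (hrx : r < x) (hxb : x ≤ b) :
    (∫ t in r..x, g t) / (x - r) ^ 2 ≤ (∫ t in r..b, g t) / (b - r) ^ 2 := by
  have hxr : 0 < (x - r) ^ 2 := pow_pos (sub_pos.2 hrx) 2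
  rw [div_le_iff₀ hxr, div_mul_eq_mul_div, mul_div_assoc, ← div_pow, mul_comm]
  exact hg.intervalIntegral_le_sq_mul hgr hgi hrx hxb

theorem convex_weighted_integral_ratio_zero_general (a b r β c : ℝ) (g : ℝ → ℝ)
    (hr : r ∈ Set.Ico a b)
    (hg : ConvexOn ℝ (Set.Icc a b) g) (hgr : g r = 0)
    (hgi : IntervalIntegrable g volume a b)
    (G : ℝ → ℝ) (hG : G = fun x => c + ∫ t in a..x, Real.exp β * g t) :
    ∀ x ∈ Set.Ioc r b,
      (G x - G r) / (x - r) ^ 2 ≤ (G b - G r) / (b - r) ^ 2 := by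
  rintro x ⟨hrx, hxb⟩
  have hint : ∀ y ∈ Icc a b, IntervalIntegrable g volume a y := fun y hy =>
    hgi.mono_set (uIcc_subset_uIcc_left (mem_uIcc_of_le hy.1 hy.2))
  have hG_sub : ∀ y ∈ Icc a b, G y - G r = Real.exp β * ∫ t in r..y, g t := fun y hy => by
    simp only [hG]
    rw [intervalIntegral.integral_const_mul, intervalIntegral.integral_const_mul,
      add_sub_add_left_eq_sub, ← mul_sub,
      integral_interval_sub_left (hint y hy) (hint r (Ico_subset_Icc_self hr))]
  have hrb : IntervalIntegrable g volume r b :=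
    hgi.mono_set (uIcc_subset_uIcc_right (mem_uIcc_of_le hr.1 hr.2.le))
  rw [hG_sub x ⟨hr.1.trans hrx.le, hxb⟩, hG_sub b ⟨hr.1.trans hr.2.le, le_rfl⟩,
    mul_div_assoc, mul_div_assoc]
  exact mul_le_mul_of_nonneg_left ((hg.subset (Icc_subset_Icc_left hr.1)
    (convex_Icc r b)).intervalIntegral_div_sq_le hgr hrb hrx hxb) (Real.exp_nonneg β)

theorem convex_weighted_integral_ratio_zero (a b r β c : ℝ) (g : ℝ → ℝ)
    (hab : a ≤ b) (hr : r ∈ Set.Ico a b)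
    (hg : ConvexOn ℝ (Set.Icc a b) g) (hgr : g r = 0)
    (hgi : IntervalIntegrable g volume a b)
    (G : ℝ → ℝ) (hG : G = fun x => c + ∫ t in a..x, Real.exp β * g t) :
    ∀ x ∈ Set.Ioc r b,
      (G x - G r) / (x - r) ^ 2 ≤ (G b - G r) / (b - r) ^ 2 :=
  convex_weighted_integral_ratio_zero_general a b r β c g hr hg hgr hgi G hG
end

section
/- Let g : [a,b] → (-∞,∞] be convex with g(r) = 0 for some r ∈ [a,b), let α ≠ 0 and β, c ∈ ℝ, and define G(x) = c + ∫_a^x e^{αt+β} g(t) dt. Then for every x ∈ (r,b], (G(x) - G(r))/(1 + e^{α(x-r)}(α(x-r) - 1)) ≤ (G(b) - G(r))/(1 + e^{α(b-r)}(α(b-r) - 1)). -/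
/-!
Write `e^{αt+β} g t = w t * (g t / (t - r))` with the weight `w t = e^{αt+β} (t - r) ≥ 0` on
`[r, b]`. Since `g r = 0`, the factor `g t / (t - r)` is the slope of the secant of `g` through
`r`, nondecreasing by convexity, and `∫_r^x w = e^{αr+β} / α² * (1 + e^{α(x-r)} (α(x-r) - 1))`.
So both sides are, up to the same positive constant, `w`-weighted averages of a nondecreasing
function over `[r, x]` and `[r, b]`, and such averages grow with the interval.
-/

open MeasureTheory intervalIntegral

theorem div_le_add_div_add {𝕜 : Type*} [Field 𝕜] [LinearOrder 𝕜] [IsStrictOrderedRing 𝕜]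
    {m n n' p q : 𝕜} (hp : 0 < p) (hq : 0 ≤ q) (hn : n ≤ m * p) (hn' : m * q ≤ n') :
    n / p ≤ (n + n') / (p + q) := by
  rw [div_le_div_iff₀ hp (by linarith)]
  nlinarith [mul_le_mul_of_nonneg_right hn hq, mul_le_mul_of_nonneg_left hn' hp.le]

theorem integral_div_integral_le_of_le_mul_of_mul_le {φ ρ : ℝ → ℝ} {r x b m : ℝ}
    (hrx : r ≤ x) (hxb : x ≤ b)
    (hφ : IntervalIntegrable φ volume r b) (hρ : IntervalIntegrable ρ volume r b)
    (hρ_nonneg : ∀ t ∈ Set.Icc x b, 0 ≤ ρ t) (hpos : 0 < ∫ t in r..x, ρ t)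
    (hle : ∀ t ∈ Set.Icc r x, φ t ≤ m * ρ t) (hge : ∀ t ∈ Set.Icc x b, m * ρ t ≤ φ t) :
    (∫ t in r..x, φ t) / (∫ t in r..x, ρ t) ≤ (∫ t in r..b, φ t) / (∫ t in r..b, ρ t) := by
  have hx : x ∈ Set.uIcc r b := Set.mem_uIcc_of_le hrx hxb
  have hφ₁ := hφ.mono_set (Set.uIcc_subset_uIcc_left hx)
  have hφ₂ := hφ.mono_set (Set.uIcc_subset_uIcc_right hx)
  have hρ₁ := hρ.mono_set (Set.uIcc_subset_uIcc_left hx)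
  have hρ₂ := hρ.mono_set (Set.uIcc_subset_uIcc_right hx)
  rw [← integral_add_adjacent_intervals hφ₁ hφ₂, ← integral_add_adjacent_intervals hρ₁ hρ₂]
  refine div_le_add_div_add (m := m) hpos (integral_nonneg hxb hρ_nonneg) ?_ ?_
  · rw [← intervalIntegral.integral_const_mul]
    exact integral_mono_on hrx hφ₁ (hρ₁.const_mul m) hle
  · rw [← intervalIntegral.integral_const_mul]
    exact integral_mono_on hxb (hρ₂.const_mul m) hφ₂ hge

theorem ConvexOn.le_secant_line {s : Set ℝ} {f : ℝ → ℝ} (hf : ConvexOn ℝ s f) {r x t : ℝ}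
    (hr : r ∈ s) (hx : x ∈ s) (hrt : r ≤ t) (htx : t ≤ x) (hrx : r < x) :
    f t ≤ f r + (f x - f r) / (x - r) * (t - r) := by
  rcases hrt.eq_or_lt with rfl | hrt
  · simp
  have ht : t ∈ s := hf.1.ordConnected.out hr hx ⟨hrt.le, htx⟩
  have hslope := hf.secant_mono hr ht hx hrt.ne' hrx.ne' htx
  rw [div_le_iff₀ (sub_pos.2 hrt)] at hslope
  linarith

theorem ConvexOn.secant_line_le {s : Set ℝ} {f : ℝ → ℝ} (hf : ConvexOn ℝ s f) {r x t : ℝ}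
    (hr : r ∈ s) (hx : x ∈ s) (ht : t ∈ s) (hrx : r < x) (hxt : x ≤ t) :
    f r + (f x - f r) / (x - r) * (t - r) ≤ f t := by
  have hslope := hf.secant_mono hr hx ht hrx.ne' (by linarith) hxt
  rw [le_div_iff₀ (by linarith)] at hslope
  linarith

theorem ConvexOn.integral_mul_div_integral_mul_sub_le {g w : ℝ → ℝ} {r x b : ℝ}
    (hg : ConvexOn ℝ (Set.Icc r b) g) (hgr : g r = 0) (hrx : r < x) (hxb : x ≤ b)
    (hw : ∀ t ∈ Set.Icc r b, 0 < w t)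
    (hwg : IntervalIntegrable (fun t => w t * g t) volume r b)
    (hwr : IntervalIntegrable (fun t => w t * (t - r)) volume r b) :
    (∫ t in r..x, w t * g t) / (∫ t in r..x, w t * (t - r))
      ≤ (∫ t in r..b, w t * g t) / (∫ t in r..b, w t * (t - r)) := by
  have hrI : r ∈ Set.Icc r b := ⟨le_rfl, hrx.le.trans hxb⟩
  have hxI : x ∈ Set.Icc r b := ⟨hrx.le, hxb⟩
  have hpos : 0 < ∫ t in r..x, w t * (t - r) :=
    intervalIntegral_pos_of_pos_on
      (hwr.mono_set (Set.uIcc_subset_uIcc_left (Set.mem_uIcc_of_le hrx.le hxb)))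
      (fun t ht => mul_pos (hw t ⟨ht.1.le, by linarith [ht.2]⟩) (sub_pos.2 ht.1)) hrx
  refine integral_div_integral_le_of_le_mul_of_mul_le (m := g x / (x - r)) hrx.le hxb hwg hwr
    (fun t ht => mul_nonneg (hw t ⟨hrx.le.trans ht.1, ht.2⟩).le (by linarith [ht.1]))
    hpos (fun t ht => ?_) (fun t ht => ?_)
  · have hsecant := hg.le_secant_line hrI hxI ht.1 ht.2 hrx
    rw [hgr, sub_zero, zero_add] at hsecant
    rw [mul_left_comm]
    exact mul_le_mul_of_nonneg_left hsecant (hw t ⟨ht.1, ht.2.trans hxb⟩).le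
  · have htI : t ∈ Set.Icc r b := ⟨hrx.le.trans ht.1, ht.2⟩
    have hsecant := hg.secant_line_le hrI hxI htI hrx ht.1
    rw [hgr, sub_zero, zero_add] at hsecant
    rw [mul_left_comm]
    exact mul_le_mul_of_nonneg_left hsecant (hw t htI).le

theorem integral_exp_mul_sub {α : ℝ} (hα : α ≠ 0) (β r u : ℝ) :
    ∫ t in r..u, Real.exp (α * t + β) * (t - r) =
      Real.exp (α * r + β) / α ^ 2 * (1 + Real.exp (α * (u - r)) * (α * (u - r) - 1)) := by
  have hderiv (t : ℝ) : HasDerivAt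
      (fun u => Real.exp (α * r + β) / α ^ 2 * (1 + Real.exp (α * (u - r)) * (α * (u - r) - 1)))
      (Real.exp (α * t + β) * (t - r)) t := by
    have hlin : HasDerivAt (fun u => α * (u - r)) α t := by
      simpa using ((hasDerivAt_id t).sub_const r).const_mul α
    refine (((hlin.exp.mul (hlin.sub_const 1)).const_add 1).const_mul
      (Real.exp (α * r + β) / α ^ 2)).congr_deriv ?_
    rw [show α * t + β = (α * r + β) + α * (t - r) by ring, Real.exp_add (α * r + β)]
    field_simp
    ring
  rw [integral_eq_sub_of_hasDerivAt (fun t _ => hderiv t)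
    (by apply Continuous.intervalIntegrable; fun_prop)]
  simp

theorem convex_weighted_integral_ratio_general (a b r α β c : ℝ) (g : ℝ → ℝ)
    (hr : r ∈ Set.Ico a b) (hα : α ≠ 0)
    (hg : ConvexOn ℝ (Set.Icc a b) g) (hgr : g r = 0)
    (hgi : IntervalIntegrable (fun t => Real.exp (α * t + β) * g t) volume a b)
    (G : ℝ → ℝ) (hG : G = fun x => c + ∫ t in a..x, Real.exp (α * t + β) * g t) :
    ∀ x ∈ Set.Ioc r b,
      (G x - G r) / (1 + Real.exp (α * (x - r)) * (α * (x - r) - 1))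
        ≤ (G b - G r) / (1 + Real.exp (α * (b - r)) * (α * (b - r) - 1)) := by
  rintro x ⟨hrx, hxb⟩
  have hsub {u : ℝ} (hau : a ≤ u) (hub : u ≤ b) : Set.uIcc a u ⊆ Set.uIcc a b :=
    Set.uIcc_subset_uIcc_left (Set.mem_uIcc_of_le hau hub)
  have hGsub {u : ℝ} (hau : a ≤ u) (hub : u ≤ b) :
      G u - G r = ∫ t in r..u, Real.exp (α * t + β) * g t := by
    rw [hG, add_sub_add_left_eq_sub]
    exact integral_interval_sub_left (hgi.mono_set (hsub hau hub))
      (hgi.mono_set (hsub hr.1 hr.2.le))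
  have hden (u : ℝ) : 1 + Real.exp (α * (u - r)) * (α * (u - r) - 1) =
      (∫ t in r..u, Real.exp (α * t + β) * (t - r)) / (Real.exp (α * r + β) / α ^ 2) := by
    rw [integral_exp_mul_sub hα]
    field_simp
  have hratio := (hg.subset (Set.Icc_subset_Icc_left hr.1) (convex_Icc r b)
    ).integral_mul_div_integral_mul_sub_le hgr hrx hxb (fun t _ => Real.exp_pos (α * t + β))
    (hgi.mono_set (Set.uIcc_subset_uIcc_right (Set.mem_uIcc_of_le hr.1 hr.2.le)))
    (by apply Continuous.intervalIntegrable; fun_prop)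
  rw [hGsub (hr.1.trans hrx.le) hxb, hGsub (hr.1.trans hr.2.le) le_rfl, hden x, hden b,
    div_div_eq_mul_div, div_div_eq_mul_div, mul_div_right_comm,
    mul_div_right_comm (∫ t in r..b, _)]
  exact mul_le_mul_of_nonneg_right hratio (by positivity)

theorem convex_weighted_integral_ratio (a b r α β c : ℝ) (g : ℝ → ℝ)
    (hab : a ≤ b) (hr : r ∈ Set.Ico a b) (hα : α ≠ 0)
    (hg : ConvexOn ℝ (Set.Icc a b) g) (hgr : g r = 0)
    (hgi : IntervalIntegrable (fun t => Real.exp (α * t + β) * g t) volume a b)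
    (G : ℝ → ℝ) (hG : G = fun x => c + ∫ t in a..x, Real.exp (α * t + β) * g t) :
    ∀ x ∈ Set.Ioc r b,
      (G x - G r) / (1 + Real.exp (α * (x - r)) * (α * (x - r) - 1))
        ≤ (G b - G r) / (1 + Real.exp (α * (b - r)) * (α * (b - r) - 1)) :=
  convex_weighted_integral_ratio_general a b r α β c g hr hα hg hgr hgi G hG
end

section
/- Let φ : ℝ → [-∞,∞) be a concave function whose domain (where φ > -∞) is contained in [0,1], and suppose ∫₀¹ (e^{φ(u)/2} - 1)² du ≤ δ² for some δ ∈ (0, 2^{-5/2}]. Then φ(x) ≤ 2^{13/2} δ for every x ∈ [0,1]. -/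
/-!
Put `u = √2 δ` and suppose `f x₀ > exp (64 u)`. By Chebyshev's inequality for `(√f - 1)²`,
`√f ≥ 1 - 2u` off a set of measure `1/8`, so some `y ∈ [0,1]` with `|y - x₀| ≥ 3/8` has
`f y ≥ (1 - 2u)²`. Log-concavity along `[y, x₀]` gives `f ≥ √(f x₀) (1 - 2u)² ≥ (1 + 6u)²` on the
half of that segment next to `x₀`, a set of length `≥ 3/16` on which `(√f - 1)² ≥ 36 u²`; Chebyshev
allows such a set measure at most `1/72`. Chebyshev applies because `(√f - 1)²` is integrable: a
log-concave function with bounded support is bounded.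
-/

open MeasureTheory Set Real

/-- `f = exp φ` for a concave `φ : ℝ → [-∞, ∞)`, with `f = 0` where `φ = -∞`. -/
structure IsLogConcave (f : ℝ → ℝ) : Prop where
  nonneg : ∀ x, 0 ≤ f x
  rpow_mul_rpow_le : ∀ x y t : ℝ, 0 ≤ t → t ≤ 1 →
    f x ^ t * f y ^ (1 - t) ≤ f (t * x + (1 - t) * y)

lemma min_one_le_rpow {x t : ℝ} (hx : 0 ≤ x) (ht0 : 0 ≤ t) (ht1 : t ≤ 1) :
    min x 1 ≤ x ^ t := by
  rcases le_total x 1 with hx1 | hx1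
  · simpa [min_eq_left hx1] using rpow_le_rpow_of_exponent_ge' hx hx1 ht0 ht1
  · exact (min_le_right _ _).trans (one_le_rpow hx1 ht0)

lemma sq_one_sub_le_of_sq_sqrt_sub_one_lt {a ε : ℝ} (ha : 0 ≤ a) (hε0 : 0 ≤ ε)
    (hε : ε ≤ 1) (h : (√a - 1) ^ 2 < ε ^ 2) : (1 - ε) ^ 2 ≤ a := by
  have : 1 - ε ≤ √a := by
    by_contra! h'
    nlinarith [mul_self_lt_mul_self hε0 (show ε < 1 - √a by linarith)]
  rw [← sq_sqrt ha]
  exact pow_le_pow_left₀ (by linarith) this 2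

lemma sq_one_add_six_mul_le_exp_mul_sq {u : ℝ} (hu0 : 0 ≤ u) (hu : u ≤ 1 / 4) :
    (1 + 6 * u) ^ 2 ≤ exp (32 * u) * (1 - 2 * u) ^ 2 := calc
  (1 + 6 * u) ^ 2 ≤ ((1 + 16 * u) * (1 - 2 * u)) ^ 2 :=
    pow_le_pow_left₀ (by positivity) (by nlinarith) 2
  _ ≤ (exp (16 * u) * (1 - 2 * u)) ^ 2 :=
    pow_le_pow_left₀ (mul_nonneg (by positivity) (by linarith))
      (mul_le_mul_of_nonneg_right (by linarith [add_one_le_exp (16 * u)]) (by linarith)) 2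
  _ = exp (32 * u) * (1 - 2 * u) ^ 2 := by
    rw [mul_pow, ← exp_nat_mul]; ring_nf

lemma measureReal_sep_le_setIntegral_div {α : Type*} [MeasurableSpace α] {μ : Measure α}
    {s : Set α} {g : α → ℝ} (hs : MeasurableSet s) (hg : IntegrableOn g s μ)
    (hg0 : ∀ x ∈ s, 0 ≤ g x) {e : ℝ} (he : 0 < e) :
    μ.real {x ∈ s | e ≤ g x} ≤ (∫ x in s, g x ∂μ) / e := by
  have h := mul_meas_ge_le_integral_of_nonneg (ae_restrict_of_forall_mem hs hg0) hg e
  rw [measureReal_restrict_apply' hs, inter_comm] at h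
  rwa [le_div_iff₀ he, mul_comm]

lemma measureReal_le_setIntegral_div_of_forall_le {α : Type*} [MeasurableSpace α]
    {μ : Measure α} {s t : Set α} {g : α → ℝ} (hs : MeasurableSet s) (hμs : μ s ≠ ⊤)
    (hg : IntegrableOn g s μ) (hg0 : ∀ x ∈ s, 0 ≤ g x) {e : ℝ} (he : 0 < e) (hts : t ⊆ s)
    (hgt : ∀ x ∈ t, e ≤ g x) : μ.real t ≤ (∫ x in s, g x ∂μ) / e :=
  (measureReal_mono (show t ⊆ {x ∈ s | e ≤ g x} from fun x hx => ⟨hts hx, hgt x hx⟩)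
    ((measure_mono (sep_subset _ _)).trans_lt hμs.lt_top).ne).trans
    (measureReal_sep_le_setIntegral_div hs hg hg0 he)

lemma exists_mem_Icc_le_abs_sub_and_lt {g : ℝ → ℝ} {a b H e r : ℝ} (x₀ : ℝ)
    (hg : IntegrableOn g (Icc a b)) (hg0 : ∀ x ∈ Icc a b, 0 ≤ g x)
    (hH : ∫ x in Icc a b, g x ≤ H) (he : 0 < e) (hr : 0 ≤ r) (h : H / e + 2 * r < b - a) :
    ∃ y ∈ Icc a b, r ≤ |y - x₀| ∧ g y < e := by
  by_contra! hcon
  have hcover : Icc a b ⊆ {x ∈ Icc a b | e ≤ g x} ∪ Metric.ball x₀ r := fun y hy =>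
    (le_or_gt r |y - x₀|).imp (fun hry => ⟨hy, hcon y hy hry⟩) fun hry => by
      rwa [Metric.mem_ball, Real.dist_eq]
  have hfin : volume ({x ∈ Icc a b | e ≤ g x} ∪ Metric.ball x₀ r) ≠ ⊤ :=
    (measure_union_lt_top ((measure_mono (sep_subset _ _)).trans_lt measure_Icc_lt_top)
      measure_ball_lt_top).ne
  have hvol := (measureReal_mono hcover hfin).trans (measureReal_union_le _ _)
  rw [Real.volume_real_Icc, Real.volume_real_ball hr] at hvol
  have hmarkov := measureReal_sep_le_setIntegral_div measurableSet_Icc hg hg0 he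
  have hH' : (∫ x in Icc a b, g x) / e ≤ H / e := by gcongr
  linarith [le_max_left (b - a) 0]

namespace IsLogConcave

variable {f : ℝ → ℝ}

lemma comp_neg (hf : IsLogConcave f) : IsLogConcave (fun x => f (-x)) where
  nonneg x := hf.nonneg (-x)
  rpow_mul_rpow_le x y t ht0 ht1 := by
    convert hf.rpow_mul_rpow_le (-x) (-y) t ht0 ht1 using 2
    ring

lemma min_le (hf : IsLogConcave f) (x y : ℝ) {t : ℝ} (ht0 : 0 ≤ t) (ht1 : t ≤ 1) :
    min (f x) (f y) ≤ f (t * x + (1 - t) * y) := by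
  have hm : 0 ≤ min (f x) (f y) := le_min (hf.nonneg x) (hf.nonneg y)
  calc min (f x) (f y) = min (f x) (f y) ^ t * min (f x) (f y) ^ (1 - t) := by
        rw [← rpow_add' hm (by norm_num), add_sub_cancel, rpow_one]
    _ ≤ f x ^ t * f y ^ (1 - t) := by
        gcongr
        exacts [rpow_nonneg (hf.nonneg x) t, min_le_left _ _, min_le_right _ _]
    _ ≤ f (t * x + (1 - t) * y) := hf.rpow_mul_rpow_le x y t ht0 ht1

lemma quasiconcaveOn (hf : IsLogConcave f) : QuasiconcaveOn ℝ univ f :=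
  quasiconcaveOn_iff_min_le.2 ⟨convex_univ, fun x _ y _ a b ha hb hab => by
    simpa [← hab] using hf.min_le x y ha (by linarith)⟩

lemma measurable (hf : IsLogConcave f) : Measurable f :=
  measurable_of_Ici fun c => by
    have : f ⁻¹' Ici c = {x | x ∈ univ ∧ c ≤ f x} := by ext; simp
    exact this ▸ (hf.quasiconcaveOn c).ordConnected.measurableSet

lemma mul_log_add_mul_log_le (hf : IsLogConcave f) {x y t : ℝ} (hx : 0 < f x) (hy : 0 < f y)
    (ht0 : 0 ≤ t) (ht1 : t ≤ 1) :
    t * log (f x) + (1 - t) * log (f y) ≤ log (f (t * x + (1 - t) * y)) := by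
  calc t * log (f x) + (1 - t) * log (f y) = log (f x ^ t * f y ^ (1 - t)) := by
        rw [log_mul (rpow_pos_of_pos hx t).ne' (rpow_pos_of_pos hy _).ne', log_rpow hx,
          log_rpow hy]
    _ ≤ _ := log_le_log (by positivity) (hf.rpow_mul_rpow_le x y t ht0 ht1)

lemma le_exp_of_le_of_lt (hf : IsLogConcave f) {x z y : ℝ} (hxz : x ≤ z) (hzy : z < y)
    (hy : 0 < f y) :
    f x ≤ exp ((|log (f z)| + |log (f y)|) * (y - x) / (y - z)) := by
  rcases (hf.nonneg x).eq_or_lt with hx | hx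
  · exact hx ▸ (exp_pos _).le
  have hyx : 0 < y - x := by linarith
  set t := (y - z) / (y - x) with ht
  have ht0 : 0 < t := div_pos (by linarith) hyx
  have ht1 : t ≤ 1 := (div_le_one hyx).2 (by linarith)
  have hzt : t * x + (1 - t) * y = z := by rw [ht]; field_simp; ring
  have key := hf.mul_log_add_mul_log_le hx hy ht0.le ht1
  rw [hzt] at key
  have htx : t * log (f x) ≤ |log (f z)| + |log (f y)| := by
    nlinarith [le_abs_self (log (f z)), neg_abs_le (log (f y)), abs_nonneg (log (f y))]
  rw [← exp_log hx, exp_le_exp, mul_div_assoc, ← inv_div, ← div_eq_mul_inv,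
    le_div_iff₀ ht0, mul_comm]
  exact htx

lemma bddAbove_range {l r : ℝ} (hf : IsLogConcave f) (hsupp : Function.support f ⊆ Icc l r) :
    BddAbove (range f) := by
  rcases (Function.support f).subsingleton_or_nontrivial with hsing | hnt
  · refine ((hsing.image f).finite.insert 0).bddAbove.mono ?_
    rintro _ ⟨x, rfl⟩
    by_cases hx : f x = 0
    · exact .inl hx
    · exact .inr ⟨x, hx, rfl⟩
  obtain ⟨a, ha, b, hb, hab⟩ := hnt.exists_lt
  have ha' : 0 < f a := (hf.nonneg a).lt_of_ne' ha
  have hb' : 0 < f b := (hf.nonneg b).lt_of_ne' hb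
  refine ⟨exp ((|log (f a)| + |log (f ((a + b) / 2))| + |log (f b)|) * (r - l) / ((b - a) / 2)),
    ?_⟩
  rintro _ ⟨x, rfl⟩
  by_cases hx : x ∈ Function.support f
  swap
  · exact (Function.notMem_support.1 hx).symm ▸ (exp_pos _).le
  obtain ⟨hlx, hxr⟩ := hsupp hx
  obtain ⟨hla, -⟩ := hsupp ha
  obtain ⟨-, hbr⟩ := hsupp hb
  rcases le_total x ((a + b) / 2) with hxm | hmx
  · refine (hf.le_exp_of_le_of_lt hxm (by linarith) hb').trans ?_
    rw [show b - (a + b) / 2 = (b - a) / 2 by ring]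
    gcongr exp (?_ * ?_ / _) <;> linarith [abs_nonneg (log (f a))]
  · have := hf.comp_neg.le_exp_of_le_of_lt (x := -x) (z := -((a + b) / 2)) (y := -a)
      (by linarith) (by linarith) (by simpa using ha')
    simp only [neg_neg] at this
    refine this.trans ?_
    rw [show -a - -((a + b) / 2) = (b - a) / 2 by ring, show -a - -x = x - a by ring]
    gcongr exp (?_ * ?_ / _) <;> linarith [abs_nonneg (log (f b))]

lemma integrableOn_sq_sqrt_sub_one {l r : ℝ} (hf : IsLogConcave f)
    (hsupp : Function.support f ⊆ Icc l r) :
    IntegrableOn (fun x => (√(f x) - 1) ^ 2) (Icc l r) := by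
  obtain ⟨B, hB⟩ := hf.bddAbove_range hsupp
  refine IntegrableOn.of_bound measure_Icc_lt_top
    ((hf.measurable.sqrt.sub_const 1).pow_const 2).aestronglyMeasurable (B + 1)
    (Filter.Eventually.of_forall fun x => ?_)
  rw [Real.norm_eq_abs, abs_of_nonneg (sq_nonneg _)]
  nlinarith [sq_sqrt (hf.nonneg x), sqrt_nonneg (f x), hB ⟨x, rfl⟩]

lemma sqrt_mul_min_le_of_mem_segment (hf : IsLogConcave f) {x y z : ℝ} (hx : 1 ≤ f x)
    (hz : z ∈ segment ℝ (midpoint ℝ x y) x) : √(f x) * min (f y) 1 ≤ f z := by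
  obtain ⟨a, b, ha, hb, hab, rfl⟩ := hz
  have hzt : a • midpoint ℝ x y + b • x = (b + a / 2) * x + (1 - (b + a / 2)) * y := by
    rw [midpoint_eq_smul_add, smul_eq_mul, smul_eq_mul, smul_eq_mul, ← hab]
    simp only [invOf_eq_inv]; ring
  rw [hzt]
  refine le_trans ?_ (hf.rpow_mul_rpow_le x y _ (by linarith) (by linarith))
  refine mul_le_mul ?_ (min_one_le_rpow (hf.nonneg y) (by linarith) (by linarith))
    (le_min (hf.nonneg y) zero_le_one) (rpow_nonneg (hf.nonneg x) _)
  rw [sqrt_eq_rpow]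
  exact rpow_le_rpow_of_exponent_le hx (by linarith)

theorem le_exp_of_setIntegral_le (hf : IsLogConcave f) (hsupp : Function.support f ⊆ Icc 0 1)
    {u : ℝ} (hu0 : 0 < u) (hu : u ≤ 1 / 4)
    (hH : ∫ x in Icc 0 1, (√(f x) - 1) ^ 2 ≤ u ^ 2 / 2) :
    ∀ x ∈ Icc (0 : ℝ) 1, f x ≤ exp (64 * u) := by
  intro x₀ hx₀
  by_contra! hM
  have hg := hf.integrableOn_sq_sqrt_sub_one hsupp
  have hg0 : ∀ x ∈ Icc (0 : ℝ) 1, 0 ≤ (√(f x) - 1) ^ 2 := fun _ _ => sq_nonneg _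
  obtain ⟨y, hy, hfar, hgy⟩ := exists_mem_Icc_le_abs_sub_and_lt x₀ hg hg0 hH
    (e := (2 * u) ^ 2) (r := 3 / 8) (by positivity) (by norm_num) (by field_simp; norm_num)
  have hfy := sq_one_sub_le_of_sq_sqrt_sub_one_lt (hf.nonneg y) (by positivity) (by linarith) hgy
  have hsqrt : exp (32 * u) ≤ √(f x₀) := by
    rw [le_sqrt' (exp_pos _), ← exp_nat_mul, show ((2 : ℕ) : ℝ) * (32 * u) = 64 * u by ring]
    exact hM.le
  have hseg : ∀ z ∈ segment ℝ (midpoint ℝ x₀ y) x₀, (6 * u) ^ 2 ≤ (√(f z) - 1) ^ 2 := by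
    intro z hz
    have hfz := hf.sqrt_mul_min_le_of_mem_segment ((one_le_exp (by positivity)).trans hM.le) hz
    have : (1 + 6 * u) ^ 2 ≤ f z := (sq_one_add_six_mul_le_exp_mul_sq hu0.le hu).trans <|
      (mul_le_mul hsqrt (le_min hfy (by nlinarith)) (sq_nonneg _) (sqrt_nonneg _)).trans hfz
    nlinarith [le_sqrt_of_sq_le this]
  have hvol := measureReal_le_setIntegral_div_of_forall_le measurableSet_Icc
    measure_Icc_lt_top.ne hg hg0 (by positivity)
    ((convex_Icc 0 1).segment_subset ((convex_Icc 0 1).midpoint_mem hx₀ hy) hx₀) hseg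
  rw [segment_eq_uIcc, Real.volume_real_interval, ← Real.dist_eq, dist_left_midpoint,
    Real.dist_eq, abs_sub_comm] at hvol
  have hH' : (∫ x in Icc 0 1, (√(f x) - 1) ^ 2) / (6 * u) ^ 2 ≤ 1 / 72 := by
    rw [div_le_iff₀ (by positivity)]; linarith
  norm_num at hvol
  linarith

end IsLogConcave

lemma two_rpow_thirteen_div_two : (2 : ℝ) ^ ((13 : ℝ) / 2) = 64 * √2 := by
  rw [rpow_div_two_eq_sqrt _ zero_le_two, show (13 : ℝ) = (13 : ℕ) by norm_num, rpow_natCast,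
    show 13 = 2 * 6 + 1 by rfl, pow_succ, pow_mul, sq_sqrt zero_le_two]
  norm_num

lemma two_rpow_neg_five_div_two : (2 : ℝ) ^ (-(5 : ℝ) / 2) = √2 / 8 := by
  rw [rpow_div_two_eq_sqrt _ zero_le_two, rpow_neg (sqrt_nonneg 2),
    show (5 : ℝ) = (5 : ℕ) by norm_num, rpow_natCast, show 5 = 2 * 2 + 1 by rfl, pow_succ,
    pow_mul, sq_sqrt zero_le_two]
  field_simp
  rw [sq_sqrt zero_le_two]
  norm_num

/-- Upper bound for a log-concave function `f = exp φ` (with `φ` concave, possibly `-∞`,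
encoded by `f ≥ 0` and the multiplicative log-concavity inequality) whose domain is
contained in `[0,1]` and which is within squared Hellinger distance `δ²` of the uniform
density on `[0,1]`: `φ x ≤ 2^(13/2) δ`, i.e. `f x ≤ exp (2^(13/2) δ)`, for all `x ∈ [0,1]`. -/
theorem logconcave_near_uniform_upper (f : ℝ → ℝ) (δ : ℝ)
    (hδ0 : 0 < δ) (hδ : δ ≤ 2 ^ (-(5:ℝ)/2))
    (hf0 : ∀ x, 0 ≤ f x)
    (hlc : ∀ x y : ℝ, ∀ t : ℝ, 0 ≤ t → t ≤ 1 →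
      f x ^ t * f y ^ (1 - t) ≤ f (t * x + (1 - t) * y))
    (hdom : ∀ x, x ∉ Set.Icc (0:ℝ) 1 → f x = 0)
    (hH : ∫ u in Set.Icc (0:ℝ) 1, (Real.sqrt (f u) - 1) ^ 2 ≤ δ ^ 2) :
    ∀ x ∈ Set.Icc (0:ℝ) 1, f x ≤ Real.exp (2 ^ ((13:ℝ)/2) * δ) := by
  have h2 : √2 ^ 2 = 2 := sq_sqrt zero_le_two
  rw [two_rpow_neg_five_div_two] at hδ
  rw [two_rpow_thirteen_div_two, mul_assoc]
  refine IsLogConcave.le_exp_of_setIntegral_le ⟨hf0, hlc⟩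
    (fun x hx => by_contra fun h => hx (hdom x h)) (by positivity) ?_ ?_
  · nlinarith [mul_le_mul_of_nonneg_left hδ (sqrt_nonneg 2)]
  · rwa [mul_pow, h2, mul_div_cancel_left₀ _ two_ne_zero]
end

section
/- Let φ : ℝ → [-∞,∞) be a concave function whose domain is contained in [0,1], and suppose ∫₀¹ (e^{φ(u)/2} - 1)² du ≤ δ² for some δ ∈ (0, 2^{-5/2}]. Then for every x ∈ [0,1] with min(x, 1-x) ≥ 4δ², one has φ(x) ≥ -4δ / √(min(x, 1-x)). -/
/-!
Put `m = min x (1 - x)` and `s = δ / √m ≤ 1/2`. A log-concave `f` is unimodal, so `f ≤ f x` on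
`[0, x]` or on `[x, 1]`, an interval of length at least `m`. If `√(f x) < 1 - s`, the Hellinger
integrand exceeds `s²` on that interval and the integral exceeds `m s² = δ²`. Hence
`f x ≥ (1 - s)² ≥ exp (-4 s)`.

The Bochner integral of a non-integrable function is `0`, so the hypothesis on the integral is
only informative because a log-concave function with bounded support is bounded.
-/

open MeasureTheory Set Real

/-- `f = exp φ` with `φ` concave with values in `[-∞, ∞)`; `f x = 0` encodes `φ x = -∞`. -/
def IsLogConcave_s11 (f : ℝ → ℝ) : Prop :=
  ∀ x y t : ℝ, 0 ≤ t → t ≤ 1 → f x ^ t * f y ^ (1 - t) ≤ f (t * x + (1 - t) * y)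

theorem min_le_rpow_mul_rpow {a b t : ℝ} (ha : 0 ≤ a) (hb : 0 ≤ b) (ht0 : 0 ≤ t) (ht1 : t ≤ 1) :
    min a b ≤ a ^ t * b ^ (1 - t) := by
  have hm : 0 ≤ min a b := le_min ha hb
  calc min a b = min a b ^ t * min a b ^ (1 - t) := by
        rw [← rpow_add' hm (by norm_num), add_sub_cancel, rpow_one]
    _ ≤ a ^ t * b ^ (1 - t) := by
        gcongr
        exacts [min_le_left a b, min_le_right a b]

theorem IsLogConcave_s11.quasiconcaveOn {f : ℝ → ℝ} (hf0 : ∀ x, 0 ≤ f x) (hf : IsLogConcave_s11 f) :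
    QuasiconcaveOn ℝ univ f := by
  refine convex_univ.quasiconcaveOn_of_convex_ge fun r x hx y hy a b ha hb hab => ?_
  obtain rfl : b = 1 - a := by linarith
  calc r ≤ min (f x) (f y) := le_min hx hy
    _ ≤ f x ^ a * f y ^ (1 - a) := min_le_rpow_mul_rpow (hf0 x) (hf0 y) ha (by linarith)
    _ ≤ f (a • x + (1 - a) • y) := hf x y a ha (by linarith)

theorem QuasiconcaveOn.measurable {f : ℝ → ℝ} (hf : QuasiconcaveOn ℝ univ f) : Measurable f :=
  measurable_of_Ici fun r =>
    (convex_iff_ordConnected.1 (by simpa using hf r : Convex ℝ {x | r ≤ f x})).measurableSet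

section Quasiconcave

variable {β : Type*} [LinearOrder β] {f : ℝ → β}

theorem QuasiconcaveOn.min_le_of_mem_Icc (hf : QuasiconcaveOn ℝ univ f) {x y u : ℝ}
    (hu : u ∈ Icc x y) : min (f x) (f y) ≤ f u :=
  ((convex_iff_ordConnected.1 (hf (min (f x) (f y)))).out
    ⟨mem_univ x, min_le_left _ _⟩ ⟨mem_univ y, min_le_right _ _⟩ hu).2

theorem QuasiconcaveOn.forall_le_or_forall_le (hf : QuasiconcaveOn ℝ univ f) (x : ℝ) :
    (∀ u ≤ x, f u ≤ f x) ∨ (∀ u, x ≤ u → f u ≤ f x) := by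
  by_contra! ⟨⟨a, hax, ha⟩, ⟨b, hxb, hb⟩⟩
  exact (lt_min ha hb).not_ge (hf.min_le_of_mem_Icc ⟨hax, hxb⟩)

end Quasiconcave

theorem IsLogConcave_s11.le_mul_div_rpow {f : ℝ → ℝ} (hf0 : ∀ x, 0 ≤ f x) (hf : IsLogConcave_s11 f)
    {z w t τ c : ℝ} (hc : 0 < c) (hcw : c ≤ f w) (hca : c ≤ f (t * z + (1 - t) * w))
    (hτ : 0 < τ) (hτt : τ ≤ t) (ht1 : t ≤ 1) :
    f z ≤ c * (f (t * z + (1 - t) * w) / c) ^ τ⁻¹ := by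
  set a := t * z + (1 - t) * w
  have ht : 0 < t := hτ.trans_le hτt
  have hratio : (f z / c) ^ t ≤ f a / c := by
    rw [le_div_iff₀ hc]
    calc (f z / c) ^ t * c = f z ^ t * c ^ (1 - t) := by
          rw [div_rpow (hf0 z) hc.le, rpow_sub hc, rpow_one]
          field_simp
      _ ≤ f z ^ t * f w ^ (1 - t) :=
          mul_le_mul_of_nonneg_left (rpow_le_rpow hc.le hcw (by linarith)) (rpow_nonneg (hf0 z) t)
      _ ≤ f a := hf z w t ht.le ht1
  have hone : 1 ≤ f a / c := (one_le_div hc).2 hca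
  calc f z = c * (f z / c) := by field_simp
    _ ≤ c * (f a / c) ^ t⁻¹ := by
        gcongr
        exact (le_rpow_inv_iff_of_pos (div_nonneg (hf0 z) hc.le) (by positivity) ht).2 hratio
    _ ≤ c * (f a / c) ^ τ⁻¹ := by gcongr

/-- Writing the midpoint `m` of `[u₀, u₁]` as a convex combination of `z ∈ [a, b]` and `u₀` or
`u₁`, the weight of `z` is at least `τ`; since `f ≥ c` on `[u₀, u₁]`, this bounds `f z`. -/
theorem IsLogConcave_s11.bddAbove_range_of_pos {f : ℝ → ℝ} (hf0 : ∀ x, 0 ≤ f x)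
    (hf : IsLogConcave_s11 f) {a b : ℝ} (hdom : ∀ x ∉ Icc a b, f x = 0) {u₀ u₁ : ℝ} (hu : u₀ < u₁)
    (hpos₀ : 0 < f u₀) (hpos₁ : 0 < f u₁) : BddAbove (range f) := by
  have mem_of_pos : ∀ {u}, 0 < f u → u ∈ Icc a b := fun h => by_contra fun hu => h.ne' (hdom _ hu)
  obtain ⟨ha, -⟩ := mem_of_pos hpos₀
  obtain ⟨-, hb⟩ := mem_of_pos hpos₁
  set c := min (f u₀) (f u₁)
  have hc : 0 < c := lt_min hpos₀ hpos₁
  set m := (u₀ + u₁) / 2 with hm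
  have hcm : c ≤ f m :=
    (hf.quasiconcaveOn hf0).min_le_of_mem_Icc ⟨by linarith, by linarith⟩
  set τ := (u₁ - u₀) / 2 / (b - a) with hτ_def
  have hτ : 0 < τ := div_pos (by linarith) (by linarith)
  refine ⟨c * (f m / c) ^ τ⁻¹, forall_mem_range.2 fun z => ?_⟩
  by_cases hz : z ∈ Icc a b
  swap
  · rw [hdom z hz]; exact mul_nonneg hc.le (rpow_nonneg (div_nonneg (hf0 m) hc.le) _)
  rcases le_total z m with hzm | hmz
  · have hzu : 0 < u₁ - z := by linarith
    have hcomb : (u₁ - m) / (u₁ - z) * z + (1 - (u₁ - m) / (u₁ - z)) * u₁ = m := by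
      field_simp; ring
    have hτt : τ ≤ (u₁ - m) / (u₁ - z) := by
      rw [hτ_def, show u₁ - m = (u₁ - u₀) / 2 by linarith]
      gcongr; linarith [hz.1]
    have key := hf.le_mul_div_rpow hf0 hc (min_le_right _ _) (by rwa [hcomb]) hτ hτt
      ((div_le_one hzu).2 (by linarith))
    rwa [hcomb] at key
  · have hzu : 0 < z - u₀ := by linarith
    have hcomb : (m - u₀) / (z - u₀) * z + (1 - (m - u₀) / (z - u₀)) * u₀ = m := by
      field_simp; ring
    have hτt : τ ≤ (m - u₀) / (z - u₀) := by
      rw [hτ_def, show m - u₀ = (u₁ - u₀) / 2 by linarith]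
      gcongr; linarith [hz.2]
    have key := hf.le_mul_div_rpow hf0 hc (min_le_left _ _) (by rwa [hcomb]) hτ hτt
      ((div_le_one hzu).2 (by linarith))
    rwa [hcomb] at key

theorem IsLogConcave_s11.bddAbove_range {f : ℝ → ℝ} (hf0 : ∀ x, 0 ≤ f x) (hf : IsLogConcave_s11 f)
    {a b : ℝ} (hdom : ∀ x ∉ Icc a b, f x = 0) : BddAbove (range f) := by
  by_cases htwo : ∃ u₀ u₁, u₀ < u₁ ∧ 0 < f u₀ ∧ 0 < f u₁
  · obtain ⟨u₀, u₁, hu, hpos₀, hpos₁⟩ := htwo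
    exact hf.bddAbove_range_of_pos hf0 hdom hu hpos₀ hpos₁
  push Not at htwo
  obtain ⟨p, hp⟩ | hnone := em (∃ p, 0 < f p)
  · refine ⟨f p, forall_mem_range.2 fun u => le_of_not_gt fun hu => ?_⟩
    rcases lt_trichotomy u p with h | rfl | h
    · exact (htwo u p h (hp.trans hu)).not_gt hp
    · exact lt_irrefl _ hu
    · exact (htwo p u h hp).not_gt (hp.trans hu)
  · push Not at hnone
    exact ⟨0, forall_mem_range.2 hnone⟩

theorem integrableOn_sq_sqrt_sub_one {f : ℝ → ℝ} (hf0 : ∀ x, 0 ≤ f x) (hmeas : Measurable f)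
    (hbdd : BddAbove (range f)) {s : Set ℝ} (hs : volume s ≠ ⊤) :
    IntegrableOn (fun u => (√(f u) - 1) ^ 2) s := by
  obtain ⟨M, hM⟩ := hbdd
  refine Measure.integrableOn_of_bounded (M := M + 1) hs
    (((continuous_sqrt.measurable.comp hmeas).sub_const 1).pow_const 2).aestronglyMeasurable
    (ae_of_all _ fun u => ?_)
  rw [norm_of_nonneg (sq_nonneg _)]
  nlinarith [sq_sqrt (hf0 u), sqrt_nonneg (f u), hM (mem_range_self u)]

theorem mul_le_setIntegral_of_le_on_Icc {g : ℝ → ℝ} {s : Set ℝ} {p q C : ℝ} (hpq : p ≤ q)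
    (hsub : Icc p q ⊆ s) (hg : IntegrableOn g s) (hg0 : 0 ≤ g) (hC : ∀ u ∈ Icc p q, C ≤ g u) :
    C * (q - p) ≤ ∫ u in s, g u :=
  calc C * (q - p) = C * volume.real (Icc p q) := by rw [Real.volume_real_Icc_of_le hpq]
    _ ≤ ∫ u in Icc p q, g u :=
        setIntegral_ge_of_const_le_real measurableSet_Icc (by simp) hC (hg.mono_set hsub)
    _ ≤ ∫ u in s, g u := setIntegral_mono_set hg (ae_of_all _ hg0) hsub.eventuallyLE

theorem QuasiconcaveOn.sq_one_sub_sqrt_mul_le_integral {f : ℝ → ℝ}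
    (hf : QuasiconcaveOn ℝ univ f)
    (hint : IntegrableOn (fun u => (√(f u) - 1) ^ 2) (Icc 0 1))
    {x : ℝ} (hx : x ∈ Icc 0 1) (hfx : f x ≤ 1) :
    (1 - √(f x)) ^ 2 * min x (1 - x) ≤ ∫ u in Icc (0 : ℝ) 1, (√(f u) - 1) ^ 2 := by
  obtain ⟨p, q, hpq, hsub, hlen, hle⟩ : ∃ p q, p ≤ q ∧ Icc p q ⊆ Icc 0 1 ∧
      min x (1 - x) ≤ q - p ∧ ∀ u ∈ Icc p q, f u ≤ f x := by
    rcases hf.forall_le_or_forall_le x with hleft | hright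
    · exact ⟨0, x, hx.1, Icc_subset_Icc le_rfl hx.2, by simp, fun u hu => hleft u hu.2⟩
    · exact ⟨x, 1, hx.2, Icc_subset_Icc hx.1 le_rfl, by simp, fun u hu => hright u hu.1⟩
  have hsqrt_le : √(f x) ≤ 1 := sqrt_le_one.mpr hfx
  have hC : ∀ u ∈ Icc p q, (1 - √(f x)) ^ 2 ≤ (√(f u) - 1) ^ 2 := fun u hu => by
    have := sqrt_le_sqrt (hle u hu)
    nlinarith [sqrt_nonneg (f u)]
  calc (1 - √(f x)) ^ 2 * min x (1 - x) ≤ (1 - √(f x)) ^ 2 * (q - p) := by gcongr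
    _ ≤ _ := mul_le_setIntegral_of_le_on_Icc hpq hsub hint (fun u => sq_nonneg _) hC

theorem QuasiconcaveOn.sq_one_sub_div_sqrt_le {f : ℝ → ℝ} (hf0 : ∀ x, 0 ≤ f x)
    (hf : QuasiconcaveOn ℝ univ f)
    (hint : IntegrableOn (fun u => (√(f u) - 1) ^ 2) (Icc 0 1)) {δ : ℝ} (hδ : 0 ≤ δ)
    (hH : ∫ u in Icc (0 : ℝ) 1, (√(f u) - 1) ^ 2 ≤ δ ^ 2) {x : ℝ} (hx : x ∈ Icc 0 1)
    (hm : 0 < min x (1 - x)) (hδm : δ ≤ √(min x (1 - x))) :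
    (1 - δ / √(min x (1 - x))) ^ 2 ≤ f x := by
  set m := min x (1 - x)
  set s := δ / √m
  have hs0 : 0 ≤ s := by positivity
  have hs1 : s ≤ 1 := div_le_one_of_le₀ hδm (sqrt_nonneg m)
  rcases le_or_gt (f x) 1 with hfx | hfx
  swap
  · nlinarith
  have hsq : (1 - √(f x)) ^ 2 ≤ s ^ 2 := by
    have hδs : δ ^ 2 = s ^ 2 * m := by
      rw [div_pow, sq_sqrt hm.le, div_mul_cancel₀ _ hm.ne']
    exact le_of_mul_le_mul_right
      ((hf.sq_one_sub_sqrt_mul_le_integral hint hx hfx).trans (hH.trans hδs.le)) hm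
  have hgap : 1 - √(f x) ≤ s :=
    (pow_le_pow_iff_left₀ (by simpa using sqrt_le_one.mpr hfx) hs0 two_ne_zero).1 hsq
  calc (1 - s) ^ 2 ≤ √(f x) ^ 2 := by gcongr; linarith
    _ = f x := sq_sqrt (hf0 x)

theorem exp_neg_four_mul_le_one_sub_sq {s : ℝ} (hs0 : 0 ≤ s) (hs : s ≤ 1 / 2) :
    exp (-(4 * s)) ≤ (1 - s) ^ 2 := by
  have hhalf : exp (-(2 * s)) ≤ 1 - s := by
    rw [exp_neg, inv_le_iff_one_le_mul₀' (exp_pos _)]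
    -- `(1 - s) (1 + 2 s) = 1 + s (1 - 2 s) ≥ 1`
    nlinarith [add_one_le_exp (2 * s)]
  calc exp (-(4 * s)) = exp (-(2 * s)) ^ 2 := by rw [← exp_nat_mul]; ring_nf
    _ ≤ (1 - s) ^ 2 := by gcongr

theorem logconcave_near_uniform_lower_general (f : ℝ → ℝ) (δ : ℝ)
    (hδ0 : 0 < δ)
    (hf0 : ∀ x, 0 ≤ f x)
    (hlc : ∀ x y : ℝ, ∀ t : ℝ, 0 ≤ t → t ≤ 1 →
      f x ^ t * f y ^ (1 - t) ≤ f (t * x + (1 - t) * y))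
    (hdom : ∀ x, x ∉ Set.Icc (0:ℝ) 1 → f x = 0)
    (hH : ∫ u in Set.Icc (0:ℝ) 1, (Real.sqrt (f u) - 1) ^ 2 ≤ δ ^ 2) :
    ∀ x ∈ Set.Icc (0:ℝ) 1, 4 * δ ^ 2 ≤ min x (1 - x) →
      Real.exp (-4 * δ / Real.sqrt (min x (1 - x))) ≤ f x := by
  intro x hx hm
  set m := min x (1 - x)
  have hm0 : 0 < m := lt_of_lt_of_le (by positivity) hm
  have h2δ : 2 * δ ≤ √m := le_sqrt_of_sq_le (by linarith)
  have hquasi := IsLogConcave_s11.quasiconcaveOn hf0 hlc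
  have hint : IntegrableOn (fun u => (√(f u) - 1) ^ 2) (Icc 0 1) :=
    integrableOn_sq_sqrt_sub_one hf0 hquasi.measurable
      (IsLogConcave_s11.bddAbove_range hf0 hlc hdom) (by simp)
  have hs : δ / √m ≤ 1 / 2 := by rw [div_le_iff₀ (sqrt_pos.2 hm0)]; linarith
  calc exp (-4 * δ / √m) = exp (-(4 * (δ / √m))) := by ring_nf
    _ ≤ (1 - δ / √m) ^ 2 := exp_neg_four_mul_le_one_sub_sq (by positivity) hs
    _ ≤ f x := hquasi.sq_one_sub_div_sqrt_le hf0 hint hδ0.le hH hx hm0 (by linarith)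

/-- Lower bound for a log-concave function `f = exp φ` (with `φ` concave, possibly `-∞`,
encoded by `f ≥ 0` and the multiplicative log-concavity inequality) whose domain is
contained in `[0,1]` and which is within squared Hellinger distance `δ²` of the uniform
density on `[0,1]`: `φ x ≥ -4δ/√(min x (1-x))` whenever `min x (1-x) ≥ 4δ²`. -/
theorem logconcave_near_uniform_lower (f : ℝ → ℝ) (δ : ℝ)
    (hδ0 : 0 < δ) (hδ : δ ≤ 2 ^ (-(5:ℝ)/2))
    (hf0 : ∀ x, 0 ≤ f x)
    (hlc : ∀ x y : ℝ, ∀ t : ℝ, 0 ≤ t → t ≤ 1 →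
      f x ^ t * f y ^ (1 - t) ≤ f (t * x + (1 - t) * y))
    (hdom : ∀ x, x ∉ Set.Icc (0:ℝ) 1 → f x = 0)
    (hH : ∫ u in Set.Icc (0:ℝ) 1, (Real.sqrt (f u) - 1) ^ 2 ≤ δ ^ 2) :
    ∀ x ∈ Set.Icc (0:ℝ) 1, 4 * δ ^ 2 ≤ min x (1 - x) →
      Real.exp (-4 * δ / Real.sqrt (min x (1 - x))) ≤ f x :=
  logconcave_near_uniform_lower_general f δ hδ0 hf0 hlc hdom hH
end

section
/- Let f₀ be a probability density on ℝ with distribution function F₀ and let X ~ f₀. If f₀(F₀^{-1}(p)) ≥ α·min(p, 1-p) for all p ∈ (0,1) and some α > 0, then for any t ≥ 2 and n ≥ 1, with probability at least 1 - 2/(α n^{t/2 - 1}) over an i.i.d. sample X₁,…,X_n from f₀, every x in [min_i X_i, max_i X_i] satisfies log(1/f₀(x)) ≤ (t/2) log n, provided additionally that log f₀ is concave on its support. -/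
/-!
Put `p = 1 / (α n^{t/2})`. Since `F₀` is continuous, `a = F₀⁻¹(p)` and `b = F₀⁻¹(1 - p)` satisfy
`F₀ a = p` and `F₀ b = 1 - p`, so by the union bound the whole sample lies in `[a, b]` except
with probability at most `2 n p`. The quantile condition gives `f₀ ≥ α p = n^{-t/2}` at `a` and
`b`, and log-concavity makes the superlevel sets of `f₀` intervals, so this bound holds on all of
`[a, b]`, hence on the sample hull.
-/

open MeasureTheory ProbabilityTheory Set Filter Topology

section DistributionFunction

variable {f : ℝ → ℝ}

theorem continuous_integral_Iic (hf : Integrable f) : Continuous fun x => ∫ u in Iic x, f u := by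
  have h : (fun x => ∫ u in Iic x, f u) = fun x => (∫ u in Iic 0, f u) + ∫ u in 0..x, f u := by
    ext x
    rw [← intervalIntegral.integral_Iic_sub_Iic hf.integrableOn hf.integrableOn, add_sub_cancel]
  rw [h]
  exact continuous_const.add (hf.continuous_primitive 0)

theorem tendsto_integral_Iic_atTop (hf : Integrable f) :
    Tendsto (fun x => ∫ u in Iic x, f u) atTop (𝓝 (∫ u, f u)) :=
  (aecover_Iic tendsto_id).integral_tendsto_of_countably_generated hf

theorem tendsto_integral_Iic_atBot : Tendsto (fun x => ∫ u in Iic x, f u) atBot (𝓝 0) :=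
  tendsto_integral_Iic_zero tendsto_id

end DistributionFunction

theorem apply_sInf_setOf_le_eq {F : ℝ → ℝ} (hF : Continuous F) (hbot : Tendsto F atBot (𝓝 0))
    (htop : Tendsto F atTop (𝓝 1)) {p : ℝ} (hp : p ∈ Ioo 0 1) :
    F (sInf {x | p ≤ F x}) = p := by
  set S := {x | p ≤ F x}
  obtain ⟨x₀, hx₀⟩ := eventually_atBot.1 (hbot.eventually (eventually_lt_nhds hp.1))
  have hbdd : BddBelow S := ⟨x₀, fun y hy => le_of_not_ge fun hyx => (hx₀ y hyx).not_ge hy⟩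
  have hne : S.Nonempty := (htop.eventually (eventually_gt_nhds hp.2)).exists.imp fun _ => le_of_lt
  refine le_antisymm ?_ ((isClosed_le continuous_const hF).csInf_mem hne hbdd)
  refine le_of_tendsto (hF.continuousAt.tendsto.mono_left nhdsWithin_le_nhds :
    Tendsto F (𝓝[<] sInf S) _)
    (eventually_nhdsWithin_of_forall fun x hx => ?_)
  exact (not_le.1 fun hpx => notMem_of_lt_csInf hx hbdd hpx).le

theorem integral_Iic_quantile_eq {f : ℝ → ℝ} (hf : Integrable f) (hf1 : ∫ x, f x = 1) {p : ℝ}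
    (hp : p ∈ Ioo 0 1) :
    ∫ u in Iic (sInf {x | p ≤ ∫ u in Iic x, f u}), f u = p :=
  apply_sInf_setOf_le_eq (continuous_integral_Iic hf) tendsto_integral_Iic_atBot
    (hf1 ▸ tendsto_integral_Iic_atTop hf) hp

theorem convex_setOf_le_of_rpow_mul_rpow_le {f : ℝ → ℝ}
    (hlc : ∀ x y : ℝ, ∀ s : ℝ, 0 ≤ s → s ≤ 1 → f x ^ s * f y ^ (1 - s) ≤ f (s * x + (1 - s) * y))
    {c : ℝ} (hc : 0 < c) : Convex ℝ {x | c ≤ f x} := by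
  intro x hx y hy s r hs hr hsr
  obtain rfl : r = 1 - s := by linarith
  calc c = c ^ s * c ^ (1 - s) := by rw [← Real.rpow_add hc, add_sub_cancel, Real.rpow_one]
    _ ≤ f x ^ s * f y ^ (1 - s) :=
      mul_le_mul (Real.rpow_le_rpow hc.le hx hs) (Real.rpow_le_rpow hc.le hy hr) (by positivity)
        (Real.rpow_nonneg (hc.le.trans hx) _)
    _ ≤ f (s * x + (1 - s) * y) := hlc x y s hs (by linarith)

theorem measure_preimage_compl_Icc_le {Ω : Type*} [MeasurableSpace Ω] {μ : Measure Ω}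
    {f : ℝ → ℝ} (hf : Integrable f) (hf1 : ∫ x, f x = 1) {X : Ω → ℝ}
    (hlaw : ∀ s : Set ℝ, MeasurableSet s → μ (X ⁻¹' s) = ENNReal.ofReal (∫ x in s, f x))
    (a b : ℝ) :
    μ (X ⁻¹' (Icc a b)ᶜ) ≤
      ENNReal.ofReal (∫ u in Iic a, f u) + ENNReal.ofReal (1 - ∫ u in Iic b, f u) := by
  have hcompl : (Icc a b)ᶜ = Iio a ∪ Ioi b := by
    ext; simp only [mem_compl_iff, mem_Icc, mem_union, mem_Iio, mem_Ioi, not_and_or, not_le]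
  rw [hcompl, preimage_union]
  refine (measure_union_le _ _).trans (add_le_add ?_ ?_)
  · rw [hlaw _ measurableSet_Iio, integral_Iic_eq_integral_Iio]
  · rw [hlaw _ measurableSet_Ioi, ← hf1,
      ← intervalIntegral.integral_Iic_add_Ioi hf.integrableOn hf.integrableOn, add_sub_cancel_left]

theorem one_sub_card_mul_le_measure_iInter {Ω ι : Type*} [MeasurableSpace Ω] [Fintype ι]
    {μ : Measure Ω} [IsProbabilityMeasure μ] {s : ι → Set Ω} {ε : ENNReal}
    (hs : ∀ i, μ (s i)ᶜ ≤ ε) : 1 - Fintype.card ι * ε ≤ μ (⋂ i, s i) := by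
  have hcompl : μ (⋂ i, s i)ᶜ ≤ Fintype.card ι * ε := calc
    μ (⋂ i, s i)ᶜ ≤ ∑ i, μ (s i)ᶜ := by rw [compl_iInter]; exact measure_iUnion_fintype_le μ _
    _ ≤ ∑ _ : ι, ε := Finset.sum_le_sum fun i _ => hs i
    _ = Fintype.card ι * ε := by rw [Finset.sum_const, Finset.card_univ, nsmul_eq_mul]
  rw [tsub_le_iff_right, ← measure_univ (μ := μ), ← union_compl_self (⋂ i, s i)]
  exact (measure_union_le _ _).trans (by gcongr)

theorem Real.log_one_div_le_mul_log_of_inv_rpow_le {n y r : ℝ} (hn : 0 < n) (hy : (n ^ r)⁻¹ ≤ y) :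
    Real.log (1 / y) ≤ r * Real.log n := by
  have hpos : 0 < (n ^ r)⁻¹ := by positivity
  calc Real.log (1 / y) ≤ Real.log (1 / (n ^ r)⁻¹) :=
        Real.log_le_log (one_div_pos.2 (hpos.trans_le hy)) (one_div_le_one_div_of_le hpos hy)
    _ = r * Real.log n := by rw [one_div, inv_inv, Real.log_rpow hn]

theorem logdensity_bound_on_sample_hull_general
    (Ω : Type*) [MeasureSpace Ω] [IsProbabilityMeasure (ℙ : Measure Ω)]
    (f₀ : ℝ → ℝ) (hfi : Integrable f₀) (hf1 : ∫ x, f₀ x = 1)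
    (hlc : ∀ x y : ℝ, ∀ s : ℝ, 0 ≤ s → s ≤ 1 →
      f₀ x ^ s * f₀ y ^ (1 - s) ≤ f₀ (s * x + (1 - s) * y))
    (F₀ : ℝ → ℝ) (hF₀ : F₀ = fun x => ∫ u in Set.Iic x, f₀ u)
    (Finv : ℝ → ℝ) (hFinv : Finv = fun p => sInf {x : ℝ | p ≤ F₀ x})
    (α : ℝ) (hα : 0 < α)
    (hquant : ∀ p ∈ Set.Ioo (0:ℝ) 1, α * min p (1 - p) ≤ f₀ (Finv p))
    (n : ℕ) (hn : 1 ≤ n) (t : ℝ)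
    (X : Fin n → Ω → ℝ)
    (hlaw : ∀ i, ∀ s : Set ℝ, MeasurableSet s →
      ℙ (X i ⁻¹' s) = ENNReal.ofReal (∫ x in s, f₀ x)) :
    ENNReal.ofReal (1 - 2 / (α * (n : ℝ) ^ (t / 2 - 1))) ≤
      ℙ {ω : Ω | ∀ x ∈ Set.Icc
          (Finset.univ.inf' ⟨⟨0, hn⟩, Finset.mem_univ _⟩ fun i => X i ω)
          (Finset.univ.sup' ⟨⟨0, hn⟩, Finset.mem_univ _⟩ fun i => X i ω),
        Real.log (1 / f₀ x) ≤ (t / 2) * Real.log n} := by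
  subst hF₀ hFinv
  set c := 2 / (α * (n : ℝ) ^ (t / 2 - 1))
  rcases le_or_gt (1 - c) 0 with hc | hc
  · rw [ENNReal.ofReal_eq_zero.2 hc]
    exact zero_le
  have hn0 : (0 : ℝ) < n := by exact_mod_cast hn
  set p := (α * (n : ℝ) ^ (t / 2))⁻¹
  have hp : 0 < p := by positivity
  have hcp : c = n * (2 * p) := by
    simp only [c, p, Real.rpow_sub hn0, Real.rpow_one]
    field_simp
  have hp2 : p < 1 / 2 := by nlinarith [(Nat.one_le_cast (α := ℝ)).2 hn]
  have hαp : α * p = ((n : ℝ) ^ (t / 2))⁻¹ := by simp only [p]; field_simp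
  set a := sInf {x | p ≤ ∫ u in Iic x, f₀ u}
  set b := sInf {x | 1 - p ≤ ∫ u in Iic x, f₀ u}
  have hfa : ((n : ℝ) ^ (t / 2))⁻¹ ≤ f₀ a := by
    have := hquant p ⟨hp, by linarith⟩
    rwa [min_eq_left (by linarith), hαp] at this
  have hfb : ((n : ℝ) ^ (t / 2))⁻¹ ≤ f₀ b := by
    have := hquant (1 - p) ⟨by linarith, by linarith⟩
    rwa [sub_sub_cancel, min_eq_right (by linarith), hαp] at this
  have hhull : Icc a b ⊆ {x | ((n : ℝ) ^ (t / 2))⁻¹ ≤ f₀ x} :=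
    (convex_iff_ordConnected.1 (convex_setOf_le_of_rpow_mul_rpow_le hlc (by positivity))).out
      hfa hfb
  have htail : ∀ i, ℙ (X i ⁻¹' Icc a b)ᶜ ≤ ENNReal.ofReal (2 * p) := by
    intro i
    have := measure_preimage_compl_Icc_le hfi hf1 (hlaw i) a b
    rwa [integral_Iic_quantile_eq hfi hf1 ⟨hp, by linarith⟩,
      integral_Iic_quantile_eq hfi hf1 ⟨by linarith, by linarith⟩, sub_sub_cancel,
      ← ENNReal.ofReal_add hp.le hp.le, ← two_mul] at this
  calc ENNReal.ofReal (1 - c) = 1 - Fintype.card (Fin n) * ENNReal.ofReal (2 * p) := by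
        rw [hcp, ENNReal.ofReal_sub _ (by positivity), ENNReal.ofReal_one,
          ENNReal.ofReal_mul hn0.le, Fintype.card_fin, ENNReal.ofReal_natCast]
    _ ≤ ℙ (⋂ i, X i ⁻¹' Icc a b) := one_sub_card_mul_le_measure_iInter htail
    _ ≤ _ := by
        refine measure_mono fun ω hω x hx => ?_
        rw [mem_iInter] at hω
        exact Real.log_one_div_le_mul_log_of_inv_rpow_le hn0
          (hhull ⟨(Finset.le_inf' _ _ fun i _ => (hω i).1).trans hx.1,
            hx.2.trans (Finset.sup'_le _ _ fun i _ => (hω i).2)⟩)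

/-- For a log-concave density `f₀` whose quantile function satisfies
`f₀(F₀⁻¹(p)) ≥ α min(p, 1-p)`, with probability at least `1 - 2/(α n^{t/2-1})` every point
`x` of the convex hull of an i.i.d. sample of size `n` from `f₀` satisfies
`log (1/f₀ x) ≤ (t/2) log n`. -/
theorem logdensity_bound_on_sample_hull
    (Ω : Type*) [MeasureSpace Ω] [IsProbabilityMeasure (ℙ : Measure Ω)]
    (f₀ : ℝ → ℝ) (hf0 : ∀ x, 0 ≤ f₀ x) (hfi : Integrable f₀) (hf1 : ∫ x, f₀ x = 1)
    (hlc : ∀ x y : ℝ, ∀ s : ℝ, 0 ≤ s → s ≤ 1 →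
      f₀ x ^ s * f₀ y ^ (1 - s) ≤ f₀ (s * x + (1 - s) * y))
    (F₀ : ℝ → ℝ) (hF₀ : F₀ = fun x => ∫ u in Set.Iic x, f₀ u)
    (Finv : ℝ → ℝ) (hFinv : Finv = fun p => sInf {x : ℝ | p ≤ F₀ x})
    (α : ℝ) (hα : 0 < α)
    (hquant : ∀ p ∈ Set.Ioo (0:ℝ) 1, α * min p (1 - p) ≤ f₀ (Finv p))
    (n : ℕ) (hn : 1 ≤ n) (t : ℝ) (ht : 2 ≤ t)
    (X : Fin n → Ω → ℝ) (hXmeas : ∀ i, Measurable (X i))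
    (hindep : iIndepFun X ℙ)
    (hlaw : ∀ i, ∀ s : Set ℝ, MeasurableSet s →
      ℙ (X i ⁻¹' s) = ENNReal.ofReal (∫ x in s, f₀ x)) :
    ENNReal.ofReal (1 - 2 / (α * (n : ℝ) ^ (t / 2 - 1))) ≤
      ℙ {ω : Ω | ∀ x ∈ Set.Icc
          (Finset.univ.inf' ⟨⟨0, hn⟩, Finset.mem_univ _⟩ fun i => X i ω)
          (Finset.univ.sup' ⟨⟨0, hn⟩, Finset.mem_univ _⟩ fun i => X i ω),
        Real.log (1 / f₀ x) ≤ (t / 2) * Real.log n} :=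
  logdensity_bound_on_sample_hull_general Ω f₀ hfi hf1 hlc F₀ hF₀ Finv hFinv α hα hquant n hn t X
    hlaw
end
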